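/- (Particle separation.) Let (x^i)_{i=1}^N, (v^i)_{i=1}^{N−1} be a solution of the particle system on (0, t'). Then for every t ∈ (0, t') and every i ∈ {1, …, N−1}: v₀^i Δx₀^i ≤ v₀* Δx^i_t and Δx^i_t ≤ Δx₀^i + t (a_max − a_min), where Δx₀^i := x₀^{i+1} − x₀^i. In particular, if v₀^i > 0 then Δx^i_t ≥ (v₀^i / v₀*) Δx₀^i > 0. -/

import Mathlib

open MeasureTheory Set Filter
open scoped ENNReal NNReal

/-- The velocity field `a(v) = f(v)/v`, extended by `a(0) = f'(0)`. -/
noncomputable def aF (f : ℝ → ℝ) (v : ℝ) : ℝ :=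
  if v = 0 then deriv f 0 else f v / v

/-- The particle velocity `V(v_l, v_r)`: the minimum of `a` over `[v_l, v_r]` if
`v_l ≤ v_r`, and the maximum of `a` over `[v_r, v_l]` if `v_r ≤ v_l`. -/
noncomputable def pV (f : ℝ → ℝ) (vl vr : ℝ) : ℝ :=
  if vl ≤ vr then sInf (aF f '' Set.Icc vl vr) else sSup (aF f '' Set.Icc vr vl)

/-- A solution of the particle system `ẋ^i = V(v^{i-1}, v^i)`,
`v^i_t = v₀^i Δx₀^i / Δx^i_t` on the time interval `[0, t')`, with the conventions
`v⁰ ≡ 0`, `v^N ≡ 0`. -/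
structure IsParticleSol (f : ℝ → ℝ) (N : ℕ) (x₀ v₀ : ℕ → ℝ) (t' : ℝ)
    (x v : ℕ → ℝ → ℝ) : Prop where
  init : ∀ i, 1 ≤ i → i ≤ N → x i 0 = x₀ i
  cont : ∀ i, 1 ≤ i → i ≤ N → ContinuousOn (x i) (Set.Ico 0 t')
  order : ∀ t ∈ Set.Ioo (0:ℝ) t', ∀ i, 1 ≤ i → i < N → x i t < x (i+1) t
  vzero : ∀ t, v 0 t = 0
  vN : ∀ t, v N t = 0
  ode : ∀ i, 1 ≤ i → i ≤ N → ∀ t ∈ Set.Ioo (0:ℝ) t',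
    HasDerivAt (x i) (pV f (v (i-1) t) (v i t)) t
  mass : ∀ i, 1 ≤ i → i < N → ∀ t ∈ Set.Ico (0:ℝ) t',
    v i t = v₀ i * (x₀ (i+1) - x₀ i) / (x (i+1) t - x i t)

/-- `v₀* = max_{1 ≤ i ≤ N-1} v₀^i`. -/
noncomputable def vstar (N : ℕ) (v₀ : ℕ → ℝ) : ℝ :=
  sSup {r | ∃ i, 1 ≤ i ∧ i ≤ N - 1 ∧ r = v₀ i}

/-- `a_min = min_{v ∈ [0, v₀*]} a(v)`. -/
noncomputable def aMin (f : ℝ → ℝ) (N : ℕ) (v₀ : ℕ → ℝ) : ℝ :=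
  sInf (aF f '' Set.Icc 0 (vstar N v₀))

/-- `a_max = max_{v ∈ [0, v₀*]} a(v)`. -/
noncomputable def aMax (f : ℝ → ℝ) (N : ℕ) (v₀ : ℕ → ℝ) : ℝ :=
  sSup (aF f '' Set.Icc 0 (vstar N v₀))

/-!
The mass `v^i Δx^i` is conserved, so the first inequality is the maximum principle
`v^i_t ≤ v₀*`. At a time where `v^j` is the largest of `v^0, …, v^N`, the definition of `V`
gives `ẋ^{j+1} = V(v^j, v^{j+1}) ≥ a(v^j) ≥ V(v^{j-1}, v^j) = ẋ^j`, so the gap `Δx^j` grows and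
`v^j` decreases; a fencing argument on the right Dini derivative of `max_j v^j` turns this into
monotonicity of the maximum. Once every `v^j` lies in `[0, v₀*]`, every particle velocity lies in
`[a_min, a_max]`, which bounds the growth rate of each gap by `a_max - a_min`.
-/

open Bornology
open scoped Topology

theorem csInf_mem_Icc_of_subset {α : Type*} [ConditionallyCompleteLattice α] {s t : Set α}
    (hb : BddBelow s) (ha : BddAbove s) (ht : t.Nonempty) (hts : t ⊆ s) :
    sInf t ∈ Icc (sInf s) (sSup s) :=
  ⟨csInf_le_csInf hb ht hts,
    (csInf_le_csSup ht (hb.mono hts) (ha.mono hts)).trans (csSup_le_csSup ha ht hts)⟩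

theorem csSup_mem_Icc_of_subset {α : Type*} [ConditionallyCompleteLattice α] {s t : Set α}
    (hb : BddBelow s) (ha : BddAbove s) (ht : t.Nonempty) (hts : t ⊆ s) :
    sSup t ∈ Icc (sInf s) (sSup s) :=
  ⟨(csInf_le_csInf hb ht hts).trans (csInf_le_csSup ht (hb.mono hts) (ha.mono hts)),
    csSup_le_csSup ha ht hts⟩

section MaxPrinciple

variable {ι : Type*} {S : Finset ι} (hS : S.Nonempty) {g : ι → ℝ → ℝ}

theorem eventually_slope_sup'_lt {g' : ι → ℝ} {s r : ℝ}
    (hg : ∀ j ∈ S, HasDerivAt (g j) (g' j) s)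
    (hmax : ∀ j ∈ S, S.sup' hS (fun k => g k s) ≤ g j s → g' j ≤ 0) (hr : 0 < r) :
    ∀ᶠ z in 𝓝[>] s, slope (fun y => S.sup' hS (fun k => g k y)) s z < r := by
  have hbound : ∀ j ∈ S, ∀ᶠ z in 𝓝[>] s, g j z < S.sup' hS (fun k => g k s) + r * (z - s) := by
    intro j hj
    rcases (S.le_sup' (fun k => g k s) hj).lt_or_eq with hlt | heq
    · filter_upwards [((hg j hj).continuousAt.eventually (Iio_mem_nhds hlt)).filter_mono
        nhdsWithin_le_nhds, self_mem_nhdsWithin] with z hz hsz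
      have := mul_pos hr (sub_pos.2 hsz)
      linarith
    · filter_upwards [(hg j hj).hasDerivWithinAt.limsup_slope_le' (lt_irrefl s)
        ((hmax j hj heq.ge).trans_lt hr), self_mem_nhdsWithin] with z hz hsz
      rw [slope_def_field, div_lt_iff₀ (sub_pos.2 hsz)] at hz
      linarith
  filter_upwards [(Filter.eventually_all_finset S).2 hbound, self_mem_nhdsWithin] with z hz hsz
  rw [slope_def_field, div_lt_iff₀ (sub_pos.2 hsz), sub_lt_iff_lt_add']
  exact (Finset.sup'_lt_iff hS).2 hz

theorem antitoneOn_sup'_of_hasDerivAt {g' : ι → ℝ → ℝ} {a b : ℝ}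
    (hcont : ∀ j ∈ S, ContinuousOn (g j) (Icc a b))
    (hg : ∀ j ∈ S, ∀ x ∈ Ioo a b, HasDerivAt (g j) (g' j x) x)
    (hmax : ∀ j ∈ S, ∀ x ∈ Ioo a b, S.sup' hS (fun k => g k x) ≤ g j x → g' j x ≤ 0) :
    AntitoneOn (fun x => S.sup' hS (fun k => g k x)) (Icc a b) := by
  set M := fun x => S.sup' hS (fun k => g k x)
  have hM : ContinuousOn M (Icc a b) := ContinuousOn.finset_sup'_apply hS hcont
  have hinterior : ∀ x' ∈ Ioo a b, ∀ y ∈ Icc x' b, M y ≤ M x' := by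
    intro x' hx' y hy
    refine image_le_of_liminf_slope_right_le_deriv_boundary (B := fun _ => M x') (B' := fun _ => 0)
      (hM.mono (Icc_subset_Icc hx'.1.le le_rfl)) le_rfl continuousOn_const
      (fun s _ => hasDerivWithinAt_const s _ (M x')) ?_ hy
    intro s hs r hr
    have hs' : s ∈ Ioo a b := ⟨hx'.1.trans_le hs.1, hs.2⟩
    exact (eventually_slope_sup'_lt hS (fun j hj => hg j hj s hs')
      (fun j hj => hmax j hj s hs') hr).frequently
  intro x hx y hy hxy
  rcases hxy.eq_or_lt with rfl | hxy
  · exact le_rfl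
  have := left_nhdsWithin_Ioo_neBot hxy
  have hlim : Tendsto M (𝓝[Ioo x y] x) (𝓝 (M x)) :=
    (hM x hx).mono_left (nhdsWithin_mono _ fun z hz => ⟨hx.1.trans hz.1.le, hz.2.le.trans hy.2⟩)
  refine ge_of_tendsto hlim (eventually_mem_nhdsWithin.mono fun x' hx' => ?_)
  exact hinterior x' ⟨hx.1.trans_lt hx'.1, hx'.2.trans_le hy.2⟩ y ⟨hx'.2.le, hy.2⟩

end MaxPrinciple

section VelocityField

variable {f : ℝ → ℝ}

theorem abs_aF_le {K : ℝ≥0} (hf : LipschitzWith K f) (hf0 : f 0 = 0) (v : ℝ) :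
    |aF f v| ≤ max (K : ℝ) |deriv f 0| := by
  unfold aF
  split_ifs with hv
  · exact le_max_right _ _
  · have hfv := hf.dist_le_mul v 0
    rw [Real.dist_eq, Real.dist_eq, hf0, sub_zero, sub_zero] at hfv
    rw [abs_div, div_le_iff₀ (abs_pos.2 hv)]
    exact hfv.trans (mul_le_mul_of_nonneg_right (le_max_left _ _) (abs_nonneg v))

theorem isBounded_range_aF {K : ℝ≥0} (hf : LipschitzWith K f) (hf0 : f 0 = 0) :
    IsBounded (range (aF f)) :=
  isBounded_iff_forall_norm_le.2 ⟨_, by rintro _ ⟨v, rfl⟩; exact abs_aF_le hf hf0 v⟩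

theorem pV_le_aF_right (ha : IsBounded (range (aF f))) {p q : ℝ} (h : p ≤ q) :
    pV f p q ≤ aF f q := by
  rw [pV, if_pos h]
  exact csInf_le (ha.bddBelow.mono (image_subset_range _ _)) ⟨q, ⟨h, le_rfl⟩, rfl⟩

theorem aF_left_le_pV (ha : IsBounded (range (aF f))) {p q : ℝ} (h : q ≤ p) :
    aF f p ≤ pV f p q := by
  rcases h.eq_or_lt with rfl | h
  · simp [pV]
  · rw [pV, if_neg h.not_ge]
    exact le_csSup (ha.bddAbove.mono (image_subset_range _ _)) ⟨p, ⟨h.le, le_rfl⟩, rfl⟩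

theorem pV_sub_pV_nonneg (ha : IsBounded (range (aF f))) {p q r : ℝ} (hq : q ≤ p) (hr : r ≤ p) :
    0 ≤ pV f p q - pV f r p :=
  sub_nonneg.2 ((pV_le_aF_right ha hr).trans (aF_left_le_pV ha hq))

theorem pV_mem_Icc (ha : IsBounded (range (aF f))) {lo hi p q : ℝ} (hp : p ∈ Icc lo hi)
    (hq : q ∈ Icc lo hi) :
    pV f p q ∈ Icc (sInf (aF f '' Icc lo hi)) (sSup (aF f '' Icc lo hi)) := by
  have hS := ha.subset (image_subset_range (aF f) (Icc lo hi))
  unfold pV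
  split_ifs with h
  · exact csInf_mem_Icc_of_subset hS.bddBelow hS.bddAbove ((nonempty_Icc.2 h).image _)
      (image_mono (Icc_subset_Icc hp.1 hq.2))
  · exact csSup_mem_Icc_of_subset hS.bddBelow hS.bddAbove
      ((nonempty_Icc.2 (le_of_not_ge h)).image _) (image_mono (Icc_subset_Icc hq.1 hp.2))

end VelocityField

theorem le_vstar {N : ℕ} {v₀ : ℕ → ℝ} {i : ℕ} (hi : 1 ≤ i) (hiN : i < N) :
    v₀ i ≤ vstar N v₀ := by
  have hfin : {r | ∃ j, 1 ≤ j ∧ j ≤ N - 1 ∧ r = v₀ j}.Finite :=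
    ((finite_Icc 1 (N - 1)).image v₀).subset fun _ ⟨j, h1, h2, hr⟩ => ⟨j, ⟨h1, h2⟩, hr.symm⟩
  exact le_csSup hfin.bddAbove ⟨i, hi, by omega, rfl⟩

noncomputable def gapRate (f : ℝ → ℝ) (v : ℕ → ℝ → ℝ) (i : ℕ) (t : ℝ) : ℝ :=
  pV f (v i t) (v (i + 1) t) - pV f (v (i - 1) t) (v i t)

namespace IsParticleSol

variable {f : ℝ → ℝ} {N : ℕ} {x₀ v₀ : ℕ → ℝ} {t' : ℝ} {x v : ℕ → ℝ → ℝ} {i : ℕ} {t : ℝ}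

theorem gap_pos (hsol : IsParticleSol f N x₀ v₀ t' x v)
    (hx₀ : ∀ i, 1 ≤ i → i < N → x₀ i < x₀ (i + 1)) (hi : 1 ≤ i) (hiN : i < N)
    (ht : t ∈ Ico 0 t') : 0 < x (i + 1) t - x i t := by
  rcases ht.1.eq_or_lt with rfl | ht0
  · rw [hsol.init i hi hiN.le, hsol.init (i + 1) (by omega) hiN]
    exact sub_pos.2 (hx₀ i hi hiN)
  · exact sub_pos.2 (hsol.order t ⟨ht0, ht.2⟩ i hi hiN)

theorem v_mul_gap (hsol : IsParticleSol f N x₀ v₀ t' x v)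
    (hx₀ : ∀ i, 1 ≤ i → i < N → x₀ i < x₀ (i + 1)) (hi : 1 ≤ i) (hiN : i < N)
    (ht : t ∈ Ico 0 t') : v i t * (x (i + 1) t - x i t) = v₀ i * (x₀ (i + 1) - x₀ i) := by
  rw [hsol.mass i hi hiN t ht, div_mul_cancel₀ _ (hsol.gap_pos hx₀ hi hiN ht).ne']

theorem v_zero (hsol : IsParticleSol f N x₀ v₀ t' x v)
    (hx₀ : ∀ i, 1 ≤ i → i < N → x₀ i < x₀ (i + 1)) (hi : 1 ≤ i) (hiN : i < N) (ht' : 0 < t') :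
    v i 0 = v₀ i := by
  have h := hsol.v_mul_gap hx₀ hi hiN ⟨le_rfl, ht'⟩
  rw [hsol.init i hi hiN.le, hsol.init (i + 1) (by omega) hiN] at h
  exact mul_right_cancel₀ (sub_pos.2 (hx₀ i hi hiN)).ne' h

theorem v_nonneg (hsol : IsParticleSol f N x₀ v₀ t' x v)
    (hx₀ : ∀ i, 1 ≤ i → i < N → x₀ i < x₀ (i + 1)) (hv₀nn : ∀ i, 1 ≤ i → i < N → 0 ≤ v₀ i)
    (hiN : i ≤ N) (ht : t ∈ Ico 0 t') : 0 ≤ v i t := by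
  rcases Nat.eq_zero_or_pos i with rfl | hi
  · rw [hsol.vzero]
  rcases hiN.eq_or_lt with rfl | hiN
  · rw [hsol.vN]
  rw [hsol.mass i hi hiN t ht]
  exact div_nonneg (mul_nonneg (hv₀nn i hi hiN) (sub_pos.2 (hx₀ i hi hiN)).le)
    (hsol.gap_pos hx₀ hi hiN ht).le

theorem v_le_of_forall_interior (hsol : IsParticleSol f N x₀ v₀ t' x v) {c : ℝ} (hc : 0 ≤ c)
    (h : ∀ j, 1 ≤ j → j < N → v j t ≤ c) {k : ℕ} (hk : k ≤ N) : v k t ≤ c := by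
  rcases Nat.eq_zero_or_pos k with rfl | hk1
  · rwa [hsol.vzero]
  rcases hk.eq_or_lt with rfl | hkN
  · rwa [hsol.vN]
  exact h k hk1 hkN

theorem continuousOn_v (hsol : IsParticleSol f N x₀ v₀ t' x v)
    (hx₀ : ∀ i, 1 ≤ i → i < N → x₀ i < x₀ (i + 1)) (hi : 1 ≤ i) (hiN : i < N) :
    ContinuousOn (v i) (Ico 0 t') := by
  refine ContinuousOn.congr ?_ fun s hs => hsol.mass i hi hiN s hs
  exact continuousOn_const.div ((hsol.cont (i + 1) (by omega) hiN).sub (hsol.cont i hi hiN.le))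
    fun s hs => (hsol.gap_pos hx₀ hi hiN hs).ne'

theorem hasDerivAt_gap (hsol : IsParticleSol f N x₀ v₀ t' x v) (hi : 1 ≤ i) (hiN : i < N)
    (ht : t ∈ Ioo 0 t') : HasDerivAt (fun s => x (i + 1) s - x i s) (gapRate f v i t) t := by
  have h := (hsol.ode (i + 1) (by omega) hiN t ht).sub (hsol.ode i hi hiN.le t ht)
  rwa [Nat.add_sub_cancel] at h

theorem hasDerivAt_v (hsol : IsParticleSol f N x₀ v₀ t' x v)
    (hx₀ : ∀ i, 1 ≤ i → i < N → x₀ i < x₀ (i + 1)) (hi : 1 ≤ i) (hiN : i < N)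
    (ht : t ∈ Ioo 0 t') :
    HasDerivAt (v i) (-(v i t / (x (i + 1) t - x i t)) * gapRate f v i t) t := by
  have hΔ := (hsol.gap_pos hx₀ hi hiN (Ioo_subset_Ico_self ht)).ne'
  have hmass : v i =ᶠ[𝓝 t] fun s => v₀ i * (x₀ (i + 1) - x₀ i) * (x (i + 1) s - x i s)⁻¹ :=
    Filter.eventually_of_mem (Ioo_mem_nhds ht.1 ht.2) fun s hs => by
      rw [hsol.mass i hi hiN s (Ioo_subset_Ico_self hs), div_eq_mul_inv]
  refine (((hsol.hasDerivAt_gap hi hiN ht).inv hΔ).const_mul _).congr_of_eventuallyEq hmass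
    |>.congr_deriv ?_
  rw [hsol.mass i hi hiN t (Ioo_subset_Ico_self ht)]
  field_simp

theorem v_le_vstar (hsol : IsParticleSol f N x₀ v₀ t' x v)
    (hx₀ : ∀ i, 1 ≤ i → i < N → x₀ i < x₀ (i + 1)) (hv₀nn : ∀ i, 1 ≤ i → i < N → 0 ≤ v₀ i)
    (ha : IsBounded (range (aF f))) (hi : 1 ≤ i) (hiN : i < N) (ht : t ∈ Ico 0 t') :
    v i t ≤ vstar N v₀ := by
  have hS : (Finset.Ico 1 N).Nonempty := ⟨i, Finset.mem_Ico.2 ⟨hi, hiN⟩⟩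
  have hmax : ∀ j ∈ Finset.Ico 1 N, ∀ s ∈ Ioo 0 t,
      (Finset.Ico 1 N).sup' hS (fun k => v k s) ≤ v j s →
      -(v j s / (x (j + 1) s - x j s)) * gapRate f v j s ≤ 0 := by
    intro j hj s hs hmax
    have hj := Finset.mem_Ico.1 hj
    have hs' : s ∈ Ico 0 t' := ⟨hs.1.le, hs.2.trans ht.2⟩
    have hvj := hsol.v_nonneg hx₀ hv₀nn hj.2.le hs'
    have hle : ∀ k ≤ N, v k s ≤ v j s := fun k => hsol.v_le_of_forall_interior hvj
      fun k hk1 hkN => ((Finset.Ico 1 N).le_sup' (fun k => v k s)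
        (Finset.mem_Ico.2 ⟨hk1, hkN⟩)).trans hmax
    have hrate : 0 ≤ gapRate f v j s :=
      pV_sub_pV_nonneg ha (hle (j + 1) hj.2) (hle (j - 1) (by omega))
    exact mul_nonpos_of_nonpos_of_nonneg
      (neg_nonpos.2 (div_nonneg hvj (hsol.gap_pos hx₀ hj.1 hj.2 hs').le)) hrate
  have hanti := antitoneOn_sup'_of_hasDerivAt hS (g := v) (a := 0) (b := t)
    (fun j hj => (hsol.continuousOn_v hx₀ (Finset.mem_Ico.1 hj).1 (Finset.mem_Ico.1 hj).2).mono
      fun s hs => ⟨hs.1, hs.2.trans_lt ht.2⟩)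
    (fun j hj s hs => hsol.hasDerivAt_v hx₀ (Finset.mem_Ico.1 hj).1 (Finset.mem_Ico.1 hj).2
      ⟨hs.1, hs.2.trans ht.2⟩)
    hmax (left_mem_Icc.2 ht.1) (right_mem_Icc.2 ht.1) ht.1
  refine ((Finset.Ico 1 N).le_sup' (fun j => v j t) (Finset.mem_Ico.2 ⟨hi, hiN⟩)).trans
    (hanti.trans (Finset.sup'_le hS _ fun j hj => ?_))
  have hj := Finset.mem_Ico.1 hj
  rw [hsol.v_zero hx₀ hj.1 hj.2 (ht.1.trans_lt ht.2)]
  exact le_vstar hj.1 hj.2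

theorem gapRate_le (hsol : IsParticleSol f N x₀ v₀ t' x v)
    (hx₀ : ∀ i, 1 ≤ i → i < N → x₀ i < x₀ (i + 1)) (hv₀nn : ∀ i, 1 ≤ i → i < N → 0 ≤ v₀ i)
    (ha : IsBounded (range (aF f))) (hi : 1 ≤ i) (hiN : i < N) (ht : t ∈ Ico 0 t') :
    gapRate f v i t ≤ aMax f N v₀ - aMin f N v₀ := by
  have hvs : 0 ≤ vstar N v₀ := (hv₀nn i hi hiN).trans (le_vstar hi hiN)
  have hmem : ∀ k ≤ N, v k t ∈ Icc 0 (vstar N v₀) := fun k hk =>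
    ⟨hsol.v_nonneg hx₀ hv₀nn hk ht, hsol.v_le_of_forall_interior hvs
      (fun j hj hjN => hsol.v_le_vstar hx₀ hv₀nn ha hj hjN ht) hk⟩
  have h₁ := pV_mem_Icc ha (hmem i hiN.le) (hmem (i + 1) hiN)
  have h₂ := pV_mem_Icc ha (hmem (i - 1) (by omega)) (hmem i hiN.le)
  unfold gapRate aMax aMin
  linarith [h₁.2, h₂.1]

theorem gap_le (hsol : IsParticleSol f N x₀ v₀ t' x v)
    (hx₀ : ∀ i, 1 ≤ i → i < N → x₀ i < x₀ (i + 1)) (hv₀nn : ∀ i, 1 ≤ i → i < N → 0 ≤ v₀ i)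
    (ha : IsBounded (range (aF f))) (hi : 1 ≤ i) (hiN : i < N) (ht : t ∈ Ioo 0 t') :
    x (i + 1) t - x i t ≤ (x₀ (i + 1) - x₀ i) + t * (aMax f N v₀ - aMin f N v₀) := by
  have hder : ∀ s ∈ Ioo 0 t, HasDerivAt (fun s => x (i + 1) s - x i s) (gapRate f v i s) s :=
    fun s hs => hsol.hasDerivAt_gap hi hiN ⟨hs.1, hs.2.trans ht.2⟩
  have h := (convex_Icc 0 t).image_sub_le_mul_sub_of_deriv_le (f := fun s => x (i + 1) s - x i s)
    (((hsol.cont (i + 1) (by omega) hiN).sub (hsol.cont i hi hiN.le)).mono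
      fun s hs => ⟨hs.1, hs.2.trans_lt ht.2⟩)
    (by
      rw [interior_Icc]
      exact fun s hs => (hder s hs).differentiableAt.differentiableWithinAt)
    (by
      rw [interior_Icc]
      exact fun s hs => (hder s hs).deriv ▸
        hsol.gapRate_le hx₀ hv₀nn ha hi hiN ⟨hs.1.le, hs.2.trans ht.2⟩)
    0 (left_mem_Icc.2 ht.1.le) t (right_mem_Icc.2 ht.1.le) ht.1.le
  rw [hsol.init i hi hiN.le, hsol.init (i + 1) (by omega) hiN] at h
  linarith

end IsParticleSol

theorem particle_separation_general (f : ℝ → ℝ) (K : ℝ≥0) (hf : LipschitzWith K f)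
    (hf0 : f 0 = 0)
    (N : ℕ) (x₀ v₀ : ℕ → ℝ)
    (hx₀ : ∀ i, 1 ≤ i → i < N → x₀ i < x₀ (i+1))
    (hv₀nn : ∀ i, 1 ≤ i → i < N → 0 ≤ v₀ i)
    (t' : ℝ) (x v : ℕ → ℝ → ℝ)
    (hsol : IsParticleSol f N x₀ v₀ t' x v) :
    ∀ t ∈ Set.Ioo (0:ℝ) t', ∀ i, 1 ≤ i → i < N →
      v₀ i * (x₀ (i+1) - x₀ i) ≤ vstar N v₀ * (x (i+1) t - x i t) ∧
      x (i+1) t - x i t ≤ (x₀ (i+1) - x₀ i) + t * (aMax f N v₀ - aMin f N v₀) ∧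
      (0 < v₀ i →
        v₀ i / vstar N v₀ * (x₀ (i+1) - x₀ i) ≤ x (i+1) t - x i t ∧
        0 < v₀ i / vstar N v₀ * (x₀ (i+1) - x₀ i)) := by
  intro t ht i hi hiN
  have ha := isBounded_range_aF hf hf0
  have hΔ := hsol.gap_pos hx₀ hi hiN (Ioo_subset_Ico_self ht)
  have hsep : v₀ i * (x₀ (i+1) - x₀ i) ≤ vstar N v₀ * (x (i+1) t - x i t) := by
    rw [← hsol.v_mul_gap hx₀ hi hiN (Ioo_subset_Ico_self ht)]
    exact mul_le_mul_of_nonneg_right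
      (hsol.v_le_vstar hx₀ hv₀nn ha hi hiN (Ioo_subset_Ico_self ht)) hΔ.le
  refine ⟨hsep, hsol.gap_le hx₀ hv₀nn ha hi hiN ht, fun hpos => ?_⟩
  have hvs : 0 < vstar N v₀ := hpos.trans_le (le_vstar hi hiN)
  refine ⟨?_, mul_pos (div_pos hpos hvs) (sub_pos.2 (hx₀ i hi hiN))⟩
  rw [div_mul_eq_mul_div, div_le_iff₀ hvs]
  linarith

/-- **Particle separation.** For a solution of the particle system on `(0, t')`,
`v₀^i Δx₀^i ≤ v₀* Δx^i_t` and `Δx^i_t ≤ Δx₀^i + t (a_max − a_min)`; in particular, if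
`v₀^i > 0` then `Δx^i_t ≥ (v₀^i / v₀*) Δx₀^i > 0`. -/
theorem particle_separation (f : ℝ → ℝ) (K : ℝ≥0) (hf : LipschitzWith K f)
    (hf0 : f 0 = 0) (hfd : DifferentiableAt ℝ f 0)
    (N : ℕ) (hN : 2 ≤ N) (x₀ v₀ : ℕ → ℝ)
    (hx₀ : ∀ i, 1 ≤ i → i < N → x₀ i < x₀ (i+1))
    (hv₀nn : ∀ i, 1 ≤ i → i < N → 0 ≤ v₀ i)
    (hv₀0 : v₀ 0 = 0) (hv₀N : v₀ N = 0)
    (t' : ℝ) (ht' : 0 < t') (x v : ℕ → ℝ → ℝ)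
    (hsol : IsParticleSol f N x₀ v₀ t' x v) :
    ∀ t ∈ Set.Ioo (0:ℝ) t', ∀ i, 1 ≤ i → i < N →
      v₀ i * (x₀ (i+1) - x₀ i) ≤ vstar N v₀ * (x (i+1) t - x i t) ∧
      x (i+1) t - x i t ≤ (x₀ (i+1) - x₀ i) + t * (aMax f N v₀ - aMin f N v₀) ∧
      (0 < v₀ i →
        v₀ i / vstar N v₀ * (x₀ (i+1) - x₀ i) ≤ x (i+1) t - x i t ∧
        0 < v₀ i / vstar N v₀ * (x₀ (i+1) - x₀ i)) :=
  particle_separation_general f K hf hf0 N x₀ v₀ hx₀ hv₀nn t' x v hsol
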